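/- arXiv:2106.00057 — 2 statements merged into one kernel-verified Lean document; each statement's English description precedes it below -/
import Mathlib

section
/- For a dominant weight λ ∈ X_ℓ (i.e. 0 ≤ ⟨λ, α_i^∨⟩ < ℓ for all simple roots α_i) with λ ≠ (ℓ−1)ρ, the Weyl dimension formula value ∏_{β∈R^+} ⟨λ+ρ, β^∨⟩ / ⟨ρ, β^∨⟩ is strictly less than ℓ^N, where N = |R^+|; equality ∏_{β∈R^+} ⟨λ+ρ, β^∨⟩ / ⟨ρ, β^∨⟩ = ℓ^N holds exactly when λ = (ℓ−1)ρ. -/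
/-- For a dominant weight `λ ∈ X_ℓ` (i.e. `0 ≤ ⟨λ, α_j^∨⟩ < ℓ` for all
simple roots) of a root system with positive coroots `co i` (each a nonnegative
nonzero combination of the simple coroots `sco j`, and each simple coroot occurring
among the positive coroots), with `⟨ρ, α_j^∨⟩ = 1`, the Weyl dimension formula value
`∏_{β>0} ⟨λ+ρ, β^∨⟩ / ⟨ρ, β^∨⟩` is `< ℓ^N` when `λ ≠ (ℓ−1)ρ`, and
`= ℓ^N` exactly when `λ = (ℓ−1)ρ` (stated multiplied out over `ℤ`:
`∏ ⟨λ+ρ, β^∨⟩` versus `ℓ^N · ∏ ⟨ρ, β^∨⟩`, where `N = |R⁺|`). -/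
theorem stmt_15 {X : Type*} [AddCommGroup X] {ι κ : Type*} [Fintype ι] [Fintype κ]
    (co : ι → X →+ ℤ) (sco : κ → X →+ ℤ) (ρ : X) (ℓ N : ℕ)
    (hℓ : 1 ≤ ℓ) (hN : N = Fintype.card ι)
    (hρ : ∀ j, sco j ρ = 1)
    (hpos : ∀ i, ∃ c : κ → ℕ, (∃ j, c j ≠ 0) ∧ ∀ x : X, co i x = ∑ j, (c j : ℤ) * sco j x)
    (hsimple : ∀ j, ∃ i, co i = sco j)
    (hfaith : ∀ x y : X, (∀ j, sco j x = sco j y) → x = y)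
    (lam : X) (hdom : ∀ j, 0 ≤ sco j lam ∧ sco j lam < (ℓ : ℤ)) :
    (lam ≠ ((ℓ : ℤ) - 1) • ρ →
      ∏ i, co i (lam + ρ) < (ℓ : ℤ) ^ N * ∏ i, co i ρ) ∧
    (∏ i, co i (lam + ρ) = (ℓ : ℤ) ^ N * ∏ i, co i ρ ↔ lam = ((ℓ : ℤ) - 1) • ρ) := by
  -- basic bounds on simple values
  have hsval : ∀ j, (1 : ℤ) ≤ sco j (lam + ρ) ∧ sco j (lam + ρ) ≤ (ℓ : ℤ) := by
    intro j
    have h := hdom j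
    rw [map_add, hρ j]
    constructor <;> linarith
  -- positivity of each factor
  have hposval : ∀ i, 0 < co i (lam + ρ) := by
    intro i
    obtain ⟨c, ⟨j0, hj0⟩, hc⟩ := hpos i
    rw [hc]
    have hterm : ∀ j ∈ Finset.univ, (c j : ℤ) ≤ (c j : ℤ) * sco j (lam + ρ) := by
      intro j _
      nlinarith [(hsval j).1, Int.ofNat_nonneg (c j)]
    have h1 : (c j0 : ℤ) ≤ ∑ j, (c j : ℤ) := by
      exact Finset.single_le_sum (fun j _ => Int.ofNat_nonneg (c j)) (Finset.mem_univ j0)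
    have h2 : (∑ j, (c j : ℤ)) ≤ ∑ j, (c j : ℤ) * sco j (lam + ρ) :=
      Finset.sum_le_sum hterm
    have h0 : (0 : ℤ) < (c j0 : ℤ) := by exact_mod_cast Nat.pos_of_ne_zero hj0
    linarith
  -- upper bound on each factor
  have hupper : ∀ i, co i (lam + ρ) ≤ (ℓ : ℤ) * co i ρ := by
    intro i
    obtain ⟨c, _, hc⟩ := hpos i
    rw [hc, hc, Finset.mul_sum]
    apply Finset.sum_le_sum
    intro j _
    rw [hρ j]
    nlinarith [(hsval j).2, Int.ofNat_nonneg (c j)]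
  -- equality case
  have heq : lam = ((ℓ : ℤ) - 1) • ρ → ∀ i, co i (lam + ρ) = (ℓ : ℤ) * co i ρ := by
    intro hl i
    obtain ⟨c, _, hc⟩ := hpos i
    have hs : ∀ j, sco j (lam + ρ) = (ℓ : ℤ) := by
      intro j
      rw [map_add, hl, map_zsmul, hρ j, smul_eq_mul]
      ring
    rw [hc, hc, Finset.mul_sum]
    apply Finset.sum_congr rfl
    intro j _
    rw [hs j, hρ j]
    ring
  -- RHS as a product
  have hrhs : (ℓ : ℤ) ^ N * ∏ i, co i ρ = ∏ i, (ℓ : ℤ) * co i ρ := by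
    rw [Finset.prod_mul_distrib, Finset.prod_const, Finset.card_univ, hN]
  -- strict case
  have hstrict : lam ≠ ((ℓ : ℤ) - 1) • ρ →
      ∏ i, co i (lam + ρ) < (ℓ : ℤ) ^ N * ∏ i, co i ρ := by
    intro hne
    have hexj : ∃ j, sco j lam ≠ (ℓ : ℤ) - 1 := by
      by_contra h
      push_neg at h
      apply hne
      apply hfaith
      intro j
      rw [map_zsmul, hρ j, h j, smul_eq_mul]
      ring
    obtain ⟨j0, hj0⟩ := hexj
    obtain ⟨i0, hi0⟩ := hsimple j0
    have hlt : co i0 (lam + ρ) < (ℓ : ℤ) * co i0 ρ := by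
      rw [hi0, map_add, hρ j0]
      have := (hdom j0).2
      have h1 : sco j0 lam < (ℓ : ℤ) - 1 := lt_of_le_of_ne (by linarith) hj0
      linarith
    rw [hrhs]
    exact Finset.prod_lt_prod (fun i _ => hposval i) (fun i _ => hupper i)
      ⟨i0, Finset.mem_univ i0, hlt⟩
  refine ⟨hstrict, ?_, fun hl => ?_⟩
  · intro hprod
    by_contra hne
    exact absurd hprod (ne_of_lt (hstrict hne))
  · rw [hrhs]
    exact Finset.prod_congr rfl (fun i _ => heq hl i)
end

section
/- Let λ ∈ X \ X⁻, so ⟨λ, α^∨⟩ ≥ 0 for some simple root α. Define λ⁰(r) ∈ X_{p^r} and λ¹(r) by λ = λ⁰(r) + p^r λ¹(r), and set λ̂(r) = 2(p^r−1)ρ + w₀λ⁰(r) + p^r λ¹(r). Then: (a) for r large enough, ω = λ¹(r) satisfies ⟨ω, β^∨⟩ ∈ {−1, 0} for all simple β and ⟨ω, α^∨⟩ = 0; (b) with such r fixed, for all s ≥ 0, ⟨λ̂(r+s), α^∨⟩ ≥ p^{r+s} − 1 and ⟨λ̂(r+s), β^∨⟩ ≥ −1 for all other simple roots β; (c) consequently,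 for any finite set of weights μ₁,…,μ_n, for s sufficiently large λ̂(r+s) is not ≤ μ_i (in dominance order) for any i. -/
/-!
Comparing the pairings of `λ = λ⁰(r) + p^r λ¹(r)` with a simple coroot shows that, once `p^r`
exceeds every `|⟨λ, β^∨⟩|`, each `⟨λ¹(r), β^∨⟩` is a "carry digit" in `{-1, 0}`, and it is `0`
at `α` because `⟨λ, α^∨⟩ ≥ 0`. Since `w₀` maps the simple coroots to negatives of simple coroots,
`⟨λ̂(r), β^∨⟩ = 2(p^r - 1) - ⟨λ⁰(r), β'^∨⟩ + p^r ⟨λ¹(r), β^∨⟩` with the middle term in `[0, p^r)`,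
which gives the bounds of (b). Then `λ̂ + 2ρ` is dominant, so its `α`-coordinate is at least half
its `α`-pairing, which grows like `p^{r+s}`; but `λ̂ ≤ μ` bounds that coordinate by the one of `μ`.
-/

open Filter

namespace Int

theorem eq_neg_one_or_eq_zero_of_eq_add_mul {a b q c : ℤ} (hb : 0 ≤ b ∧ b < q) (ha : |a| < q)
    (h : a = b + q * c) : c = -1 ∨ c = 0 := by
  obtain ⟨ha₁, ha₂⟩ := abs_lt.mp ha
  have hq : 0 < q := hb.1.trans_lt hb.2
  have hc₁ : c < 1 := lt_of_mul_lt_mul_left (by linarith) hq.le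
  have hc₂ : -2 < c := lt_of_mul_lt_mul_left (by linarith) hq.le
  omega

theorem eq_zero_of_eq_add_mul {a b q c : ℤ} (hb : 0 ≤ b ∧ b < q) (ha : 0 ≤ a ∧ a < q)
    (h : a = b + q * c) : c = 0 := by
  have hq : 0 < q := hb.1.trans_lt hb.2
  have hqc : q * c = 0 :=
    eq_zero_of_abs_lt_dvd (dvd_mul_right q c) (abs_lt.mpr ⟨by linarith, by linarith⟩)
  simpa [hq.ne'] using hqc

end Int

section Pairings

variable {X : Type*} [AddCommGroup X] (f g : X →+ ℤ) {ρ : X} {w0 : X →+ X}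

theorem map_hat_eq (hρ : f ρ = 1) (hw0 : ∀ x, f (w0 x) = -g x) (q : ℤ) (x0 x1 : X) :
    f ((2 * (q - 1)) • ρ + w0 x0 + q • x1) = 2 * (q - 1) - g x0 + q * f x1 := by
  simp only [map_add, map_zsmul, smul_eq_mul, hρ, hw0]
  ring

variable {f g}

theorem neg_one_le_map_hat (hρ : f ρ = 1) (hw0 : ∀ x, f (w0 x) = -g x) {q : ℤ} {x0 x1 : X}
    (h0 : 0 ≤ g x0 ∧ g x0 < q) (h1 : -1 ≤ f x1) :
    -1 ≤ f ((2 * (q - 1)) • ρ + w0 x0 + q • x1) := by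
  rw [map_hat_eq f g hρ hw0]
  nlinarith

theorem sub_one_le_map_hat (hρ : f ρ = 1) (hw0 : ∀ x, f (w0 x) = -g x) {q : ℤ} {x0 x1 : X}
    (h0 : 0 ≤ g x0 ∧ g x0 < q) (h1 : 0 ≤ f x1) :
    q - 1 ≤ f ((2 * (q - 1)) • ρ + w0 x0 + q • x1) := by
  rw [map_hat_eq f g hρ hw0]
  nlinarith

end Pairings

section Dominance

variable {X κ : Type*} [AddCommGroup X] {simple : κ → X} {sco : κ → X →+ ℤ} {ρ : X}
  {coord : κ → X →+ ℚ}

theorem coord_sum_zsmul_simple [Fintype κ] [DecidableEq κ]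
    (hcoordsimple : ∀ j j' : κ, coord j (simple j') = if j = j' then 1 else 0)
    (c : κ → ℕ) (i : κ) : coord i (∑ j, (c j : ℤ) • simple j) = c i := by
  simp [map_sum, hcoordsimple]

theorem coord_le_of_sub_eq_sum_simple [Fintype κ] [DecidableEq κ]
    (hcoordsimple : ∀ j j' : κ, coord j (simple j') = if j = j' then 1 else 0)
    {μ ν : X} {c : κ → ℕ} (h : μ - ν = ∑ j, (c j : ℤ) • simple j) (i : κ) :
    coord i ν ≤ coord i μ := by
  have hi := congrArg (coord i) h
  rw [map_sub, coord_sum_zsmul_simple hcoordsimple] at hi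
  linarith [(c i).cast_nonneg (α := ℚ)]

theorem sco_add_two_le_coord (hρ : ∀ j, sco j ρ = 1)
    (hdombound : ∀ x : X, (∀ j, 0 ≤ sco j x) → ∀ j, (sco j x : ℚ) ≤ 2 * coord j x)
    {ν : X} (hν : ∀ j, -1 ≤ sco j ν) (i : κ) :
    (sco i ν : ℚ) + 2 ≤ 2 * (coord i ν + 2 * coord i ρ) := by
  have hdom : ∀ j, 0 ≤ sco j (ν + (2 : ℤ) • ρ) := fun j => by
    simp only [map_add, map_zsmul, hρ, smul_eq_mul]
    linarith [hν j]
  have hi := hdombound _ hdom i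
  simp only [map_add, map_zsmul, hρ, smul_eq_mul, zsmul_eq_mul] at hi
  push_cast at hi
  linarith

theorem eventually_not_sub_eq_sum_simple [Fintype κ] [DecidableEq κ]
    (hcoordsimple : ∀ j j' : κ, coord j (simple j') = if j = j' then 1 else 0)
    (hρ : ∀ j, sco j ρ = 1)
    (hdombound : ∀ x : X, (∀ j, 0 ≤ sco j x) → ∀ j, (sco j x : ℚ) ≤ 2 * coord j x)
    {ν : ℕ → X} (hν : ∀ t j, -1 ≤ sco j (ν t)) {i : κ}
    (hi : Tendsto (fun t => sco i (ν t)) atTop atTop) (μ : X) :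
    ∀ᶠ t in atTop, ¬ ∃ c : κ → ℕ, μ - ν t = ∑ j, (c j : ℤ) • simple j := by
  filter_upwards [(tendsto_intCast_atTop_atTop.comp hi).eventually_gt_atTop
    (2 * (coord i μ + 2 * coord i ρ) : ℚ)] with t ht
  rintro ⟨c, hc⟩
  have hle := coord_le_of_sub_eq_sum_simple hcoordsimple hc i
  have hsco := sco_add_two_le_coord hρ hdombound (hν t) i
  simp only [Function.comp_apply] at ht
  linarith

end Dominance

theorem stmt_18_general {X : Type*} [AddCommGroup X] {κ : Type*} [Fintype κ] [DecidableEq κ]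
    (simple : κ → X) (sco : κ → X →+ ℤ) (ρ : X) (w0 : X →+ X)
    (coord : κ → X →+ ℚ)
    (p : ℕ) (hp : 2 ≤ p)
    (hρ : ∀ j, sco j ρ = 1)
    (hw0 : ∀ j : κ, ∃ j' : κ, ∀ x : X, sco j (w0 x) = - sco j' x)
    (hcoordsimple : ∀ j j' : κ, coord j (simple j') = if j = j' then 1 else 0)
    (hdombound : ∀ x : X, (∀ j, 0 ≤ sco j x) → ∀ j, (sco j x : ℚ) ≤ 2 * coord j x)
    (lam : X) (jα : κ) (hα : 0 ≤ sco jα lam)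
    (lam0 lam1 : ℕ → X)
    (hdecomp : ∀ r : ℕ, lam = lam0 r + ((p : ℤ) ^ r) • lam1 r)
    (hrestr : ∀ (r : ℕ) (j : κ), 0 ≤ sco j (lam0 r) ∧ sco j (lam0 r) < (p : ℤ) ^ r)
    (lamhat : ℕ → X)
    (hlamhat : ∀ r : ℕ,
      lamhat r = (2 * ((p : ℤ) ^ r - 1)) • ρ + w0 (lam0 r) + ((p : ℤ) ^ r) • lam1 r) :
    ∃ r₀ : ℕ, ∀ r ≥ r₀,
      ((∀ j : κ, sco j (lam1 r) = -1 ∨ sco j (lam1 r) = 0) ∧ sco jα (lam1 r) = 0) ∧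
      (∀ s : ℕ, ((p : ℤ) ^ (r + s) - 1 ≤ sco jα (lamhat (r + s))) ∧
        ∀ j : κ, -1 ≤ sco j (lamhat (r + s))) ∧
      (∀ (n : ℕ) (μ : Fin n → X), ∃ s₀ : ℕ, ∀ s ≥ s₀, ∀ i : Fin n,
        ¬ ∃ c : κ → ℕ, μ i - lamhat (r + s) = ∑ j, (c j : ℤ) • simple j) := by
  have hp1 : (1 : ℤ) < p := by exact_mod_cast hp
  have hpow : Tendsto (fun t : ℕ => (p : ℤ) ^ t) atTop atTop :=
    tendsto_pow_atTop_atTop_of_one_lt hp1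
  obtain ⟨r₀, hr₀⟩ := eventually_atTop.mp <|
    eventually_all.mpr fun j => hpow.eventually_gt_atTop |sco j lam|
  have hsco (t : ℕ) (j : κ) : sco j lam = sco j (lam0 t) + (p : ℤ) ^ t * sco j (lam1 t) := by
    rw [hdecomp t, map_add, map_zsmul, smul_eq_mul]
  have hdigits (t : ℕ) (ht : t ≥ r₀) :
      (∀ j, sco j (lam1 t) = -1 ∨ sco j (lam1 t) = 0) ∧ sco jα (lam1 t) = 0 :=
    ⟨fun j => Int.eq_neg_one_or_eq_zero_of_eq_add_mul (hrestr t j) (hr₀ t ht j) (hsco t j),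
      Int.eq_zero_of_eq_add_mul (hrestr t jα) ⟨hα, (abs_lt.mp (hr₀ t ht jα)).2⟩ (hsco t jα)⟩
  have hbounds (t : ℕ) (ht : t ≥ r₀) :
      ((p : ℤ) ^ t - 1 ≤ sco jα (lamhat t)) ∧ ∀ j, -1 ≤ sco j (lamhat t) := by
    obtain ⟨jα', hjα'⟩ := hw0 jα
    refine ⟨?_, fun j => ?_⟩
    · rw [hlamhat]
      exact sub_one_le_map_hat (hρ jα) hjα' (hrestr t jα') (hdigits t ht).2.ge
    · obtain ⟨j', hj'⟩ := hw0 j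
      rw [hlamhat]
      refine neg_one_le_map_hat (hρ j) hj' (hrestr t j') ?_
      rcases (hdigits t ht).1 j with h | h <;> omega
  refine ⟨r₀, fun r hr => ⟨hdigits r hr, fun s => hbounds (r + s) (by omega), fun n μ => ?_⟩⟩
  have hgrowth : Tendsto (fun s => sco jα (lamhat (r + s))) atTop atTop :=
    tendsto_atTop_mono (fun s => (hbounds (r + s) (by omega)).1) <|
      (tendsto_atTop_add_const_right _ (-1) (hpow.comp (tendsto_add_atTop_nat r))).congr
        fun s => by simp [add_comm r, sub_eq_add_neg]
  exact eventually_atTop.mp <| eventually_all.mpr fun i =>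
    eventually_not_sub_eq_sum_simple hcoordsimple hρ hdombound
      (fun s => (hbounds (r + s) (by omega)).2) hgrowth (μ i)

/-- Let `λ ∈ X \ X⁻`, so `⟨λ, α^∨⟩ ≥ 0` for some simple root
`α = simple jα`.  Write `λ = λ⁰(r) + p^r λ¹(r)` with `λ⁰(r) ∈ X_{p^r}` and set
`λ̂(r) = 2(p^r − 1)ρ + w₀ λ⁰(r) + p^r λ¹(r)`.  Then:
(a) for `r` large enough, `ω = λ¹(r)` satisfies `⟨ω, β^∨⟩ ∈ {−1, 0}` for all
simple `β` and `⟨ω, α^∨⟩ = 0`;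
(b) with such `r` fixed, for all `s ≥ 0`, `⟨λ̂(r+s), α^∨⟩ ≥ p^{r+s} − 1` and
`⟨λ̂(r+s), β^∨⟩ ≥ −1` for all simple `β`;
(c) consequently, for any finite set of weights `μ₁, …, μ_n`, for `s` sufficiently
large `λ̂(r+s)` is not `≤ μ_i` (dominance order) for any `i`.
Here `sco j` are the simple coroot pairings, `coord j` the coordinates in the basis
of simple roots (so `ρ = Σ b_β β` with all `b_β = coord β ρ > 0`), `w₀` the longest
Weyl group element (permuting the negatives of the simple coroots), and dominant
weights have nonnegative coordinates `c_β` satisfying `⟨ν, β^∨⟩ ≤ 2 c_β`. -/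
theorem stmt_18 {X : Type*} [AddCommGroup X] {κ : Type*} [Fintype κ] [DecidableEq κ]
    (simple : κ → X) (sco : κ → X →+ ℤ) (ρ : X) (w0 : X →+ X)
    (coord : κ → X →+ ℚ)
    (p : ℕ) (hp : 2 ≤ p)
    (hρ : ∀ j, sco j ρ = 1)
    (hw0 : ∀ j : κ, ∃ j' : κ, ∀ x : X, sco j (w0 x) = - sco j' x)
    (hcoordsimple : ∀ j j' : κ, coord j (simple j') = if j = j' then 1 else 0)
    (hcoordρ : ∀ j, 0 < coord j ρ)
    (hdompos : ∀ x : X, (∀ j, 0 ≤ sco j x) → ∀ j, 0 ≤ coord j x)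
    (hdombound : ∀ x : X, (∀ j, 0 ≤ sco j x) → ∀ j, (sco j x : ℚ) ≤ 2 * coord j x)
    (lam : X) (jα : κ) (hα : 0 ≤ sco jα lam)
    (lam0 lam1 : ℕ → X)
    (hdecomp : ∀ r : ℕ, lam = lam0 r + ((p : ℤ) ^ r) • lam1 r)
    (hrestr : ∀ (r : ℕ) (j : κ), 0 ≤ sco j (lam0 r) ∧ sco j (lam0 r) < (p : ℤ) ^ r)
    (lamhat : ℕ → X)
    (hlamhat : ∀ r : ℕ,
      lamhat r = (2 * ((p : ℤ) ^ r - 1)) • ρ + w0 (lam0 r) + ((p : ℤ) ^ r) • lam1 r) :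
    ∃ r₀ : ℕ, ∀ r ≥ r₀,
      ((∀ j : κ, sco j (lam1 r) = -1 ∨ sco j (lam1 r) = 0) ∧ sco jα (lam1 r) = 0) ∧
      (∀ s : ℕ, ((p : ℤ) ^ (r + s) - 1 ≤ sco jα (lamhat (r + s))) ∧
        ∀ j : κ, -1 ≤ sco j (lamhat (r + s))) ∧
      (∀ (n : ℕ) (μ : Fin n → X), ∃ s₀ : ℕ, ∀ s ≥ s₀, ∀ i : Fin n,
        ¬ ∃ c : κ → ℕ, μ i - lamhat (r + s) = ∑ j, (c j : ℤ) • simple j) :=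
  stmt_18_general simple sco ρ w0 coord p hp hρ hw0 hcoordsimple hdombound lam jα hα lam0 lam1
    hdecomp hrestr lamhat hlamhat
end
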